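/- arXiv:2101.10692 — 3 statements merged into one kernel-verified Lean document; each statement's English description precedes it below -/
import Mathlib

section
/- Relation between dictionary and difference operator. Fix n ≥ 2 and k ∈ {1,…,n−1}. Then D^k φ^k_j = D^k φ̃^k_j = 0 for every j ∈ {1,…,k}, and D^k φ^k_j = D^k φ̃^k_j = 1_{{j}} (the vector in ℝ^{n−k}, indexed by {k+1,…,n}, equal to 1 at position j and 0 elsewhere) for every j ∈ {k+1,…,n}. -/
/-!
Read a vector as a function on `ℕ`: then `D^k` is `n^(k-1)` times the `k`-th forward difference,
so `D^(k+1) f_j = n (D^k f_(j+1) - D^k f_j)`. As `φ^(k+1)_j` is `1/n` times a tail sum of the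
`φ^k_l`, this recursion turns `D^k φ^k_l = 1_{l}` into `D^(k+1) φ^(k+1)_j = 1_{j}`. In particular
`D^l φ^l_l = 0`, and the recursion propagates this to `D^k φ^l_l = 0` for `l ≤ k`. So the linear
map `D^k` vanishes on `V_m` for `m ≤ k`, hence does not see the projections `A_(V_m)`, and the
normalisation in `φ̃^k_j` is only a scalar factor.
-/

open Finset

noncomputable section

namespace VitaliTV

/-- Auxiliary recursion for the one-dimensional dictionary: `phiHigh n k j` is the dictionary
vector `φ^k_j` for `j` in the "high" range `{k, …, n}` (indices are 1-based; the entry at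
`j' : Fin n` corresponds to the 1-based index `j' + 1`).  `phiHigh n 1 j = 1{· ≥ j}` and
`phiHigh n k j = (1/n) ∑_{l = j}^{n} phiHigh n (k-1) l`. -/
def phiHigh (n : ℕ) : ℕ → ℕ → Fin n → ℝ
  | 0, _ => fun _ => 0
  | 1, j => fun j' => if j ≤ (j' : ℕ) + 1 then 1 else 0
  | (k + 2), j => fun j' => (1 / (n : ℝ)) * ∑ l ∈ Finset.Icc j n, phiHigh n (k + 1) l j'

/-- The original one-dimensional dictionary: `phi n k j = φ^k_j`, with `φ^k_j := φ^j_j` for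
`j ∈ {1, …, k-1}` and `φ^k_j := (1/n) ∑_{l ≥ j} φ^{k-1}_l` for `j ∈ {k, …, n}`. -/
def phi (n k j : ℕ) : EuclideanSpace ℝ (Fin n) :=
  if j ≤ k - 1 then WithLp.toLp 2 (phiHigh n j j) else WithLp.toLp 2 (phiHigh n k j)

/-- Antiprojection operator: `AW W v` is the orthogonal projection of `v` onto `Wᗮ`. -/
def AW {E : Type*} [NormedAddCommGroup E] [InnerProductSpace ℝ E] [FiniteDimensional ℝ E]
    (W : Submodule ℝ E) (v : E) : E :=
  (Submodule.orthogonalProjection Wᗮ v : E)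

/-- The span `V_m` of `{φ^l_l : l ∈ {1, …, m}}`. -/
def Vspan (n m : ℕ) : Submodule ℝ (EuclideanSpace ℝ (Fin n)) :=
  Submodule.span ℝ {v | ∃ l ∈ Finset.Icc 1 m, v = phi n l l}

/-- The partially orthonormalized one-dimensional dictionary `φ̃^k_j`. -/
def phiTil (n k j : ℕ) : EuclideanSpace ℝ (Fin n) :=
  if j ≤ k then
    (Real.sqrt n / ‖AW (Vspan n (j - 1)) (phi n j j)‖) • AW (Vspan n (j - 1)) (phi n j j)
  else AW (Vspan n k) (phi n k j)

/-- The one-dimensional `k`-th order difference operator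
`(D^k f)_j = n^{k−1} ∑_{l=0}^{k} (−1)^l binom(k,l) f_{j−l}` for (1-based) `j ∈ {k+1,…,n}`;
the output entry at `j : Fin (n−k)` corresponds to the 1-based index `j + k + 1`. -/
def D1 (n k : ℕ) (f : EuclideanSpace ℝ (Fin n)) : EuclideanSpace ℝ (Fin (n - k)) :=
  WithLp.toLp 2 fun (j : Fin (n - k)) => (n : ℝ) ^ (k - 1) *
    ∑ l ∈ Finset.range (k + 1),
      (-1 : ℝ) ^ l * (Nat.choose k l : ℝ) * f ⟨(j : ℕ) + k - l, by have := j.isLt; omega⟩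

theorem D1_apply_eq_fwdDiff_iter {n k : ℕ} (F : ℕ → ℝ) (f : EuclideanSpace ℝ (Fin n))
    (hF : ∀ i : Fin n, F i = f i) (j : Fin (n - k)) :
    D1 n k f j = n ^ (k - 1) * (fwdDiff 1)^[k] F j := by
  rw [fwdDiff_iter_eq_sum_shift, ← Finset.sum_range_reflect]
  simp only [D1, PiLp.toLp_apply]
  congr 1
  refine Finset.sum_congr rfl fun l hl => ?_
  have hlk : l ≤ k := Nat.lt_succ_iff.mp (Finset.mem_range.mp hl)
  rw [Nat.add_sub_cancel, Nat.sub_sub_self hlk, Nat.choose_symm hlk, ← hF, zsmul_eq_mul]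
  push_cast
  congr 2
  rw [smul_eq_mul, mul_one]
  omega

theorem D1_one_apply {n : ℕ} (f : EuclideanSpace ℝ (Fin n)) (j : Fin (n - 1)) :
    D1 n 1 f j = f ⟨j + 1, by omega⟩ - f ⟨j, by omega⟩ := by
  simp [D1, Finset.sum_range_succ, sub_eq_add_neg]

theorem D1_succ_apply {n k : ℕ} (hk : 1 ≤ k) (f : EuclideanSpace ℝ (Fin n))
    (j : Fin (n - (k + 1))) :
    D1 n (k + 1) f j = n * (D1 n k f ⟨j + 1, by omega⟩ - D1 n k f ⟨j, by omega⟩) := by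
  set F : ℕ → ℝ := fun i => if h : i < n then f ⟨i, h⟩ else 0
  have hF (i : Fin n) : F i = f i := dif_pos i.isLt
  simp only [D1_apply_eq_fwdDiff_iter F f hF, Function.iterate_succ_apply', fwdDiff]
  obtain ⟨k, rfl⟩ := Nat.exists_eq_add_of_le' hk
  simp only [Nat.add_sub_cancel]
  ring

def D1ₗ (n k : ℕ) : EuclideanSpace ℝ (Fin n) →ₗ[ℝ] EuclideanSpace ℝ (Fin (n - k)) where
  toFun := D1 n k
  map_add' f g := by
    ext j
    simp only [D1, PiLp.toLp_apply, PiLp.add_apply, mul_add, Finset.sum_add_distrib]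
  map_smul' c f := by
    ext j
    simp only [D1, PiLp.toLp_apply, PiLp.smul_apply, smul_eq_mul, Finset.mul_sum, RingHom.id_apply]
    exact Finset.sum_congr rfl fun l _ => by ring

@[simp] theorem D1ₗ_apply (n k : ℕ) (f : EuclideanSpace ℝ (Fin n)) : D1ₗ n k f = D1 n k f := rfl

theorem D1_smul (n k : ℕ) (c : ℝ) (f : EuclideanSpace ℝ (Fin n)) :
    D1 n k (c • f) = c • D1 n k f :=
  map_smul (D1ₗ n k) c f

theorem D1_eq_zero_of_le {n l k : ℕ} (hl : 1 ≤ l) (hlk : l ≤ k) {f : EuclideanSpace ℝ (Fin n)}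
    (hf : D1 n l f = 0) : D1 n k f = 0 := by
  induction k, hlk using Nat.le_induction with
  | base => exact hf
  | succ k hlk ih =>
    ext j
    rw [D1_succ_apply (hl.trans hlk), ih]
    simp

theorem toLp_phiHigh_succ {n k : ℕ} (hk : 1 ≤ k) (j : ℕ) :
    WithLp.toLp 2 (phiHigh n (k + 1) j)
      = (1 / n : ℝ) • ∑ l ∈ Icc j n, WithLp.toLp 2 (phiHigh n k l) := by
  obtain ⟨k, rfl⟩ := Nat.exists_eq_add_of_le' hk
  ext i
  simp [phiHigh]

theorem D1_toLp_phiHigh {n k : ℕ} (hk : 1 ≤ k) (j : ℕ) :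
    D1 n k (WithLp.toLp 2 (phiHigh n k j))
      = WithLp.toLp 2 (fun i : Fin (n - k) => if (i : ℕ) + k + 1 = j then 1 else 0) := by
  induction k, hk using Nat.le_induction generalizing j with
  | base =>
    ext i
    rw [D1_one_apply]
    simp only [phiHigh]
    split_ifs <;> norm_num <;> omega
  | succ k hk ih =>
    have hsum (i : Fin (n - k)) :
        D1 n k (WithLp.toLp 2 (phiHigh n (k + 1) j)) i
          = (1 / n : ℝ) * if j ≤ (i : ℕ) + k + 1 then 1 else 0 := by
      have hi : (i : ℕ) + k < n := by omega
      rw [toLp_phiHigh_succ hk, ← D1ₗ_apply, map_smul, map_sum]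
      simp [ih, hi]
    ext i
    have hn : (n : ℝ) ≠ 0 := by have := i.isLt; norm_cast; omega
    rw [D1_succ_apply hk, hsum, hsum]
    dsimp only
    split_ifs <;> simp [hn] <;> omega

theorem phi_of_le {n k j : ℕ} (hjk : j ≤ k) : phi n k j = WithLp.toLp 2 (phiHigh n j j) := by
  rcases hjk.eq_or_lt with rfl | hjk
  · unfold phi
    split_ifs <;> rfl
  · rw [phi, if_pos (by omega)]

theorem phi_of_lt {n k j : ℕ} (hkj : k < j) : phi n k j = WithLp.toLp 2 (phiHigh n k j) := by
  rw [phi, if_neg (by omega)]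

theorem D1_phi_self {n l k : ℕ} (hl : 1 ≤ l) (hlk : l ≤ k) : D1 n k (phi n l l) = 0 := by
  refine D1_eq_zero_of_le hl hlk ?_
  rw [phi_of_le le_rfl, D1_toLp_phiHigh hl]
  ext i
  exact if_neg (by omega)

theorem Vspan_le_ker_D1ₗ {n m k : ℕ} (hmk : m ≤ k) : Vspan n m ≤ LinearMap.ker (D1ₗ n k) := by
  refine Submodule.span_le.mpr ?_
  rintro _ ⟨l, hl, rfl⟩
  rw [Finset.mem_Icc] at hl
  exact D1_phi_self hl.1 (hl.2.trans hmk)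

theorem AW_eq_sub_starProjection {E : Type*} [NormedAddCommGroup E] [InnerProductSpace ℝ E]
    [FiniteDimensional ℝ E] (W : Submodule ℝ E) (v : E) : AW W v = v - W.starProjection v :=
  W.starProjection_orthogonal_val v

theorem map_AW_of_le_ker {E F : Type*} [NormedAddCommGroup E] [InnerProductSpace ℝ E]
    [FiniteDimensional ℝ E] [AddCommGroup F] [Module ℝ F] {W : Submodule ℝ E} {L : E →ₗ[ℝ] F}
    (hW : W ≤ LinearMap.ker L) (v : E) : L (AW W v) = L v := by
  rw [AW_eq_sub_starProjection, map_sub, hW (W.starProjection_apply_mem v), sub_zero]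

theorem D1_AW_Vspan {n m k : ℕ} (hmk : m ≤ k) (v : EuclideanSpace ℝ (Fin n)) :
    D1 n k (AW (Vspan n m) v) = D1 n k v :=
  map_AW_of_le_ker (Vspan_le_ker_D1ₗ hmk) v

theorem dictionary_difference_relation_general (n k : ℕ) (hk : 1 ≤ k) :
    (∀ j, 1 ≤ j → j ≤ k →
      D1 n k (phi n k j) = 0 ∧ D1 n k (phiTil n k j) = 0) ∧
    (∀ j, k + 1 ≤ j → j ≤ n →
      D1 n k (phi n k j) = WithLp.toLp 2 (fun j' : Fin (n - k) => if (j' : ℕ) + k + 1 = j then 1 else 0) ∧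
      D1 n k (phiTil n k j) = WithLp.toLp 2 (fun j' : Fin (n - k) => if (j' : ℕ) + k + 1 = j then 1 else 0)) := by
  refine ⟨fun j hj hjk => ?_, fun j hkj _ => ?_⟩
  · rw [phiTil, if_pos hjk, D1_smul, D1_AW_Vspan (by omega), phi_of_le hjk,
      ← phi_of_le (le_refl j), D1_phi_self hj hjk, smul_zero, and_self]
  · rw [phiTil, if_neg (by omega), D1_AW_Vspan le_rfl, and_self, phi_of_lt hkj]
    exact D1_toLp_phiHigh hk j

/-- **Relation between dictionary and difference operator.**  Fix `n ≥ 2` and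
`k ∈ {1, …, n−1}`.  Then `D^k φ^k_j = D^k φ̃^k_j = 0` for every `j ∈ {1, …, k}`, and
`D^k φ^k_j = D^k φ̃^k_j = 1_{{j}}` for every `j ∈ {k+1, …, n}` (the vector in `ℝ^{n−k}`,
indexed by `{k+1,…,n}`, equal to `1` at position `j` and `0` elsewhere). -/
theorem dictionary_difference_relation (n k : ℕ) (hn : 2 ≤ n) (hk : 1 ≤ k) (hk' : k ≤ n - 1) :
    (∀ j, 1 ≤ j → j ≤ k →
      D1 n k (phi n k j) = 0 ∧ D1 n k (phiTil n k j) = 0) ∧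
    (∀ j, k + 1 ≤ j → j ≤ n →
      D1 n k (phi n k j) = WithLp.toLp 2 (fun j' : Fin (n - k) => if (j' : ℕ) + k + 1 = j then 1 else 0) ∧
      D1 n k (phiTil n k j) = WithLp.toLp 2 (fun j' : Fin (n - k) => if (j' : ℕ) + k + 1 = j then 1 else 0)) :=
  dictionary_difference_relation_general n k hk

end VitaliTV
end
end

section
/- Valid noise weights. Fix k ≥ 1, an active set S with hyperrectangular tessellation {R_m}_{m=1}^s, and a constant C ≥ 1. Define v²_{i,m}(j_i) := ((t_{i,m}−j_i)/d^−_{i,m})^{2k−1} for j_i ∈ R^−_{i,m}, 0 for j_i ∈ R⁰_{i,m}, and ((j_i−t_{i,m}−k+1)/d^+_{i,m})^{2k−1} for j_i ∈ R^+_{i,m}; set v_{j₁,…,j_d} := (1/(dC)) ∑_{i=1}^d v_{i,m}(j_i) for (j₁,…,j_d) ∈ R_m, and γ̃ := C d √(∑_{i=1}^d (d_{i,max}(S)/n_i)^{2k−1}). Then for all m ∈ {1,…,s} and all (j₁,…,j_d) ∈ R_m: √(∑_{i=1}^d ṽ²_{i,m}(j_i)) ≤ v_{j₁,…,j_d} ·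 γ̃, where ṽ²_{i,m}(j_i) := ((t_{i,m}−j_i)/n_i)^{2k−1} on R^−_{i,m}, 0 on R⁰_{i,m}, and ((j_i−t_{i,m}−k+1)/n_i)^{2k−1} on R^+_{i,m}. In particular v has entries in [0,1] and defines valid noise weights. -/
/-!
In each coordinate, `ṽ²_{i,m}` and `v²_{i,m}` differ only in normalising the distance to the
jump by `n_i` instead of `d^±_{i,m} ≤ d_{i,max}(S)`, so
`ṽ²_{i,m} ≤ v²_{i,m} · (d_{i,max}(S)/n_i)^{2k−1}`. Summing over `i` and using
`∑ y_i a_i ≤ (∑ √y_i)² ∑ a_i` gives the bound. The weights lie in `[0,1]` because inside `R_m`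
the distance to the jump is at most `d^±_{i,m}`, so every `v²_{i,m} ≤ 1`.
-/

open Finset

noncomputable section

namespace VitaliTV

variable {ι : Type*} [Fintype ι] [DecidableEq ι] {s : ℕ}

abbrev DIdx (nn : ι → ℕ) (k : ℕ) := ∀ i, Fin (nn i - k)

/-- 1-based coordinates of the `m`-th jump location. -/
def jump1 (nn : ι → ℕ) (k : ℕ) (t : Fin s → DIdx nn k) (m : Fin s) (i : ι) : ℕ :=
  (t m i : ℕ) + k + 1

/-- Hyperrectangular tessellation of `∏ i, {k+1, …, nn i}` for the jump locations `t`. -/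
def IsTessellation (nn : ι → ℕ) (k : ℕ) (t : Fin s → DIdx nn k)
    (tm tp : Fin s → ι → ℕ) : Prop :=
  (∀ m i, k + 1 ≤ tm m i ∧ tp m i ≤ nn i) ∧
  (∀ j : ι → ℕ, (∀ i, k + 1 ≤ j i ∧ j i ≤ nn i) →
    ∃ m, ∀ i, tm m i ≤ j i ∧ j i ≤ tp m i) ∧
  (∀ m m', m ≠ m' →
    ¬ ∃ j : ι → ℕ, ∀ i, (tm m i < j i ∧ j i < tp m i) ∧ (tm m' i < j i ∧ j i < tp m' i)) ∧
  (∀ m i, tm m i < jump1 nn k t m i ∧ jump1 nn k t m i + k - 1 < tp m i)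

/-- `d^−_{i,m} := t_{i,m} − t^−_{i,m}`. -/
def dminus (nn : ι → ℕ) (k : ℕ) (t : Fin s → DIdx nn k) (tm : Fin s → ι → ℕ)
    (m : Fin s) (i : ι) : ℕ :=
  jump1 nn k t m i - tm m i

/-- `d^+_{i,m} := t^+_{i,m} − t_{i,m} − k + 1`. -/
def dplus (nn : ι → ℕ) (k : ℕ) (t : Fin s → DIdx nn k) (tp : Fin s → ι → ℕ)
    (m : Fin s) (i : ι) : ℕ :=
  tp m i + 1 - (jump1 nn k t m i + k)

/-- `d_{i,max}(S) := max_m max{d^−_{i,m}, d^+_{i,m}}`. -/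
def dimax (nn : ι → ℕ) (k : ℕ) (t : Fin s → DIdx nn k) (tm tp : Fin s → ι → ℕ)
    (i : ι) : ℕ :=
  Finset.univ.sup fun m => max (dminus nn k t tm m i) (dplus nn k t tp m i)

/-- The coordinatewise squared antiprojection bounds `ṽ²_{i,m}(j_i)` (normalized by `n_i`). -/
def vtSq (nn : ι → ℕ) (k : ℕ) (t : Fin s → DIdx nn k) (m : Fin s) (i : ι) (ji : ℕ) : ℝ :=
  if ji ≤ jump1 nn k t m i then
    (((jump1 nn k t m i - ji : ℕ) : ℝ) / (nn i : ℝ)) ^ (2 * k - 1)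
  else if ji ≤ jump1 nn k t m i + k - 1 then 0
  else (((ji - (jump1 nn k t m i + k - 1) : ℕ) : ℝ) / (nn i : ℝ)) ^ (2 * k - 1)

/-- The coordinatewise squared noise weights `v²_{i,m}(j_i)` (normalized by `d^±_{i,m}`). -/
def vSq (nn : ι → ℕ) (k : ℕ) (t : Fin s → DIdx nn k) (tm tp : Fin s → ι → ℕ)
    (m : Fin s) (i : ι) (ji : ℕ) : ℝ :=
  if ji ≤ jump1 nn k t m i then
    (((jump1 nn k t m i - ji : ℕ) : ℝ) / (dminus nn k t tm m i : ℝ)) ^ (2 * k - 1)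
  else if ji ≤ jump1 nn k t m i + k - 1 then 0
  else (((ji - (jump1 nn k t m i + k - 1) : ℕ) : ℝ) / (dplus nn k t tp m i : ℝ)) ^ (2 * k - 1)

end VitaliTV

theorem div_pow_le_div_pow_mul_div_pow {r D M N : ℝ} (p : ℕ) (hr : 0 ≤ r) (hN : 0 ≤ N)
    (hD : 0 < D) (hDM : D ≤ M) : (r / N) ^ p ≤ (r / D) ^ p * (M / N) ^ p := by
  rw [← mul_pow]
  gcongr
  calc r / N = r / D * (D / N) := by field_simp
    _ ≤ r / D * (M / N) := by gcongr

theorem sqrt_sum_le_sum_sqrt_mul_sqrt_sum {α : Type*} (S : Finset α) {x y a : α → ℝ}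
    (hy : ∀ i ∈ S, 0 ≤ y i) (ha : ∀ i ∈ S, 0 ≤ a i) (hxy : ∀ i ∈ S, x i ≤ y i * a i) :
    √(∑ i ∈ S, x i) ≤ (∑ i ∈ S, √(y i)) * √(∑ i ∈ S, a i) := by
  have hy_sq : ∑ i ∈ S, y i ≤ (∑ i ∈ S, √(y i)) ^ 2 := by
    calc ∑ i ∈ S, y i = ∑ i ∈ S, √(y i) ^ 2 :=
          Finset.sum_congr rfl fun i hi => (Real.sq_sqrt (hy i hi)).symm
      _ ≤ (∑ i ∈ S, √(y i)) ^ 2 := sum_sq_le_sq_sum_of_nonneg fun _ _ => Real.sqrt_nonneg _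
  have hsum : ∑ i ∈ S, x i ≤ (∑ i ∈ S, √(y i)) ^ 2 * ∑ i ∈ S, a i :=
    calc ∑ i ∈ S, x i ≤ ∑ i ∈ S, y i * ∑ j ∈ S, a j := Finset.sum_le_sum fun i hi =>
          (hxy i hi).trans (mul_le_mul_of_nonneg_left (single_le_sum ha hi) (hy i hi))
      _ = (∑ i ∈ S, y i) * ∑ i ∈ S, a i := (Finset.sum_mul ..).symm
      _ ≤ (∑ i ∈ S, √(y i)) ^ 2 * ∑ i ∈ S, a i :=
          mul_le_mul_of_nonneg_right hy_sq (sum_nonneg ha)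
  calc √(∑ i ∈ S, x i) ≤ √((∑ i ∈ S, √(y i)) ^ 2 * ∑ i ∈ S, a i) := Real.sqrt_le_sqrt hsum
    _ = (∑ i ∈ S, √(y i)) * √(∑ i ∈ S, a i) := by
      rw [Real.sqrt_mul (sq_nonneg _), Real.sqrt_sq (sum_nonneg fun _ _ => Real.sqrt_nonneg _)]

namespace VitaliTV

section Coordinatewise

variable {ι : Type*} {s : ℕ} {nn : ι → ℕ} {k : ℕ} {t : Fin s → DIdx nn k}
  {tm tp : Fin s → ι → ℕ} {m : Fin s} {i : ι} {x : ℕ}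

theorem IsTessellation.dminus_pos (htess : IsTessellation nn k t tm tp) :
    0 < dminus nn k t tm m i := by
  have := (htess.2.2.2 m i).1
  unfold dminus
  omega

theorem IsTessellation.dplus_pos (htess : IsTessellation nn k t tm tp) :
    0 < dplus nn k t tp m i := by
  have := (htess.2.2.2 m i).2
  unfold dplus
  omega

theorem max_dminus_dplus_le_dimax :
    max (dminus nn k t tm m i) (dplus nn k t tp m i) ≤ dimax nn k t tm tp i :=
  Finset.le_sup (f := fun m => max (dminus nn k t tm m i) (dplus nn k t tp m i))
    (Finset.mem_univ m)

theorem vSq_nonneg : 0 ≤ vSq nn k t tm tp m i x := by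
  unfold vSq
  split_ifs <;> positivity

theorem vSq_le_one (hx : tm m i ≤ x ∧ x ≤ tp m i) : vSq nn k t tm tp m i x ≤ 1 := by
  unfold vSq dminus dplus
  split_ifs
  · exact pow_le_one₀ (by positivity) (div_le_one_of_le₀ (by norm_cast; omega) (by positivity))
  · exact zero_le_one
  · exact pow_le_one₀ (by positivity) (div_le_one_of_le₀ (by norm_cast; omega) (by positivity))

theorem vtSq_le_vSq_mul (htess : IsTessellation nn k t tm tp) :
    vtSq nn k t m i x ≤
      vSq nn k t tm tp m i x * ((dimax nn k t tm tp i : ℝ) / (nn i : ℝ)) ^ (2 * k - 1) := by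
  have hmax : max (dminus nn k t tm m i) (dplus nn k t tp m i) ≤ dimax nn k t tm tp i :=
    max_dminus_dplus_le_dimax
  unfold vtSq vSq
  split_ifs
  · exact div_pow_le_div_pow_mul_div_pow _ (by positivity) (by positivity)
      (by exact_mod_cast htess.dminus_pos) (by exact_mod_cast le_of_max_le_left hmax)
  · simp
  · exact div_pow_le_div_pow_mul_div_pow _ (by positivity) (by positivity)
      (by exact_mod_cast htess.dplus_pos) (by exact_mod_cast le_of_max_le_right hmax)

end Coordinatewise

theorem valid_noise_weights_general
    (d : ℕ) (nn : Fin d → ℕ) (k : ℕ)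
    (s : ℕ) (t : Fin s → DIdx nn k)
    (tm tp : Fin s → Fin d → ℕ) (htess : IsTessellation nn k t tm tp)
    (C : ℝ) (hC : 1 ≤ C) :
    ∀ m : Fin s, ∀ j : Fin d → ℕ, (∀ i, tm m i ≤ j i ∧ j i ≤ tp m i) →
      (Real.sqrt (∑ i, vtSq nn k t m i (j i)) ≤
        ((1 / ((d : ℝ) * C)) * ∑ i, Real.sqrt (vSq nn k t tm tp m i (j i)))
          * (C * (d : ℝ)
              * Real.sqrt (∑ i, ((dimax nn k t tm tp i : ℝ) / (nn i : ℝ)) ^ (2 * k - 1)))) ∧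
      0 ≤ (1 / ((d : ℝ) * C)) * ∑ i, Real.sqrt (vSq nn k t tm tp m i (j i)) ∧
      (1 / ((d : ℝ) * C)) * ∑ i, Real.sqrt (vSq nn k t tm tp m i (j i)) ≤ 1 := by
  intro m j hj
  obtain rfl | hd := d.eq_zero_or_pos
  · simp
  have hC0 : 0 < C := one_pos.trans_le hC
  have hsplit : √(∑ i, vtSq nn k t m i (j i)) ≤ (∑ i, √(vSq nn k t tm tp m i (j i))) *
      √(∑ i, ((dimax nn k t tm tp i : ℝ) / (nn i : ℝ)) ^ (2 * k - 1)) :=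
    sqrt_sum_le_sum_sqrt_mul_sqrt_sum univ (fun _ _ => vSq_nonneg) (fun _ _ => by positivity)
      (fun _ _ => vtSq_le_vSq_mul htess)
  have hsum : ∑ i, √(vSq nn k t tm tp m i (j i)) ≤ d :=
    calc ∑ i, √(vSq nn k t tm tp m i (j i)) ≤ ∑ _i : Fin d, 1 :=
          sum_le_sum fun i _ => Real.sqrt_le_one.mpr (vSq_le_one (hj i))
      _ = d := by simp
  refine ⟨?_, by positivity, ?_⟩
  · convert hsplit using 1
    field_simp
  · calc 1 / (d * C) * ∑ i, √(vSq nn k t tm tp m i (j i)) ≤ 1 / (d * C) * d := by gcongr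
      _ = 1 / C := by field_simp
      _ ≤ 1 := (div_le_one hC0).mpr hC

/-- **Valid noise weights.**  Fix `k ≥ 1`, an active set `S` with hyperrectangular
tessellation `{R_m}` and a constant `C ≥ 1`.  With
`v_{j₁,…,j_d} := (1/(dC)) ∑_i v_{i,m}(j_i)` on `R_m` and
`γ̃ := C d √(∑_i (d_{i,max}(S)/n_i)^{2k−1})`, for all `m` and all `(j₁,…,j_d) ∈ R_m`:
`√(∑_i ṽ²_{i,m}(j_i)) ≤ v_{j₁,…,j_d} γ̃`; in particular `v` has entries in `[0,1]`. -/
theorem valid_noise_weights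
    (d : ℕ) (hd : 1 ≤ d) (nn : Fin d → ℕ) (k : ℕ) (hk : 1 ≤ k) (hk' : ∀ i, k ≤ nn i - 1)
    (s : ℕ) (t : Fin s → DIdx nn k) (ht : Function.Injective t)
    (tm tp : Fin s → Fin d → ℕ) (htess : IsTessellation nn k t tm tp)
    (C : ℝ) (hC : 1 ≤ C) :
    ∀ m : Fin s, ∀ j : Fin d → ℕ, (∀ i, tm m i ≤ j i ∧ j i ≤ tp m i) →
      (Real.sqrt (∑ i, vtSq nn k t m i (j i)) ≤
        ((1 / ((d : ℝ) * C)) * ∑ i, Real.sqrt (vSq nn k t tm tp m i (j i)))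
          * (C * (d : ℝ)
              * Real.sqrt (∑ i, ((dimax nn k t tm tp i : ℝ) / (nn i : ℝ)) ^ (2 * k - 1)))) ∧
      0 ≤ (1 / ((d : ℝ) * C)) * ∑ i, Real.sqrt (vSq nn k t tm tp m i (j i)) ∧
      (1 / ((d : ℝ) * C)) * ∑ i, Real.sqrt (vSq nn k t tm tp m i (j i)) ≤ 1 :=
  valid_noise_weights_general d nn k s t tm tp htess C hC

end VitaliTV
end
end

section
/- Discrete differences of some polynomials. For every integer k ≥ 1 there is a constant C_k depending only on k such that for every integer d ≥ 2k the following hold. (i) With q_j := (j/d)^{(2k−1)/2} for j = 0,…,d and (Δ^k q)_j := ∑_{l=0}^{k} (−1)^l binom(k,l) q_{j−l} for j = k,…,d, one has ∑_{j=k}^{d} (Δ^k q)_j² ≤ C_k · log(e·d)/d^{2k−1}. (ii) With p_j := (j/d)^k for j = 0,…,d, one has ∑_{j=k}^{d} (Δ^k p)_j² ≤ C_k/d^{2k−1}. -/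
/-!
For `j = k + m` the `k`-th difference of `(j/d)^p` is `d^(-p) Δ^k (t ↦ t^p)(m)`. Iterating the
mean value theorem, `Δ^k (t ↦ t^p)(m) = p(p-1)⋯(p-k+1) c^(p-k)` for some `c ≥ m`, which for
`m > 0` and `p ≤ k` is at most `|p(p-1)⋯(p-k+1)| m^(p-k)`; the single term `m = 0` is bounded
crudely by `2^k k^p`. Squaring and summing, the tail is `d^(-2p) ∑ m^(2(p-k))`: a harmonic sum,
at most `1 + log d`, for `p = k - 1/2`, and at most `d` for `p = k`.
-/

open Finset

open scoped fwdDiff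

theorem sum_alternating_choose_eq_fwdDiff_iter (f : ℝ → ℝ) (k : ℕ) (y : ℝ) :
    ∑ l ∈ range (k + 1), (-1 : ℝ) ^ l * k.choose l * f (y + k - l)
      = (Δ_[1])^[k] f y := by
  rw [fwdDiff_iter_eq_sum_shift, ← sum_range_reflect]
  refine sum_congr rfl fun l hl => ?_
  have hlk : l ≤ k := Nat.lt_succ_iff.mp (mem_range.mp hl)
  rw [Nat.add_sub_cancel, Nat.choose_symm hlk, Nat.cast_sub hlk, zsmul_eq_mul, nsmul_one]
  push_cast
  ring_nf

theorem abs_fwdDiff_iter_le {f : ℝ → ℝ} {k : ℕ} {y M : ℝ}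
    (hf : ∀ i ≤ k, |f (y + i)| ≤ M) :
    |(Δ_[1])^[k] f y| ≤ 2 ^ k * M := by
  have h2k : (2 : ℝ) ^ k = ∑ i ∈ range (k + 1), (k.choose i : ℝ) := by
    exact_mod_cast (Nat.sum_range_choose k).symm
  rw [fwdDiff_iter_eq_sum_shift, h2k, sum_mul]
  refine (abs_sum_le_sum_abs _ _).trans (sum_le_sum fun i hi => ?_)
  rw [zsmul_eq_mul, nsmul_one, abs_mul]
  push_cast
  rw [abs_mul, abs_pow, abs_neg, abs_one, one_pow, one_mul, Nat.abs_cast]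
  exact mul_le_mul_of_nonneg_left (hf i (Nat.lt_succ_iff.mp (mem_range.mp hi))) (Nat.cast_nonneg _)

/-- A discrete mean value theorem: `f n` plays the role of the `n`-th derivative of `f 0`. -/
theorem exists_fwdDiff_iter_eq_of_hasDerivAt {f : ℕ → ℝ → ℝ} {a : ℝ}
    (hf : ∀ n x, a < x → HasDerivAt (f n) (f (n + 1) x) x) (k : ℕ) {y : ℝ} (hy : a < y) :
    ∃ c ∈ Set.Icc y (y + k), (Δ_[1])^[k] (f 0) y = f k c := by
  induction k generalizing f with
  | zero => exact ⟨y, by simp, rfl⟩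
  | succ k ih =>
    have hΔf : ∀ n x, a < x → HasDerivAt (Δ_[1] (f n)) (Δ_[1] (f (n + 1)) x) x :=
      fun n x hx => ((hf n _ (by linarith)).comp_add_const x 1).sub (hf n x hx)
    obtain ⟨c, ⟨hyc, hcy⟩, hc⟩ := ih hΔf
    have hac : a < c := hy.trans_le hyc
    obtain ⟨c', ⟨hcc', hc'c⟩, hc'⟩ := exists_hasDerivAt_eq_slope (f k) (f (k + 1))
      (lt_add_one c)
      (fun x hx => (hf k x (hac.trans_le hx.1)).continuousAt.continuousWithinAt)
      (fun x hx => hf k x (hac.trans hx.1))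
    refine ⟨c', ⟨by linarith, by push_cast; linarith⟩, ?_⟩
    rw [Function.iterate_succ_apply, hc, hc', add_sub_cancel_left, div_one]
    rfl

theorem abs_fwdDiff_iter_rpow_le {p : ℝ} {k : ℕ} (hpk : p ≤ k) {y : ℝ} (hy : 0 < y) :
    |(Δ_[1])^[k] (fun t => t ^ p) y| ≤ (∏ i ∈ range k, |p - i|) * y ^ (p - k) := by
  set f : ℕ → ℝ → ℝ := fun n t => (∏ i ∈ range n, (p - i)) * t ^ (p - n)
  have hf : ∀ n x, 0 < x → HasDerivAt (f n) (f (n + 1) x) x := fun n x hx => by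
    refine ((Real.hasDerivAt_rpow_const (p := p - n) (Or.inl hx.ne')).const_mul
      (∏ i ∈ range n, (p - i))).congr_deriv ?_
    simp only [f, prod_range_succ]
    push_cast
    ring_nf
  have hf0 : f 0 = fun t => t ^ p := by funext t; simp [f]
  obtain ⟨c, ⟨hyc, -⟩, hc⟩ := exists_fwdDiff_iter_eq_of_hasDerivAt hf k hy
  rw [← hf0, hc, abs_mul, abs_prod, abs_of_pos (Real.rpow_pos_of_pos (hy.trans_le hyc) _)]
  exact mul_le_mul_of_nonneg_left (Real.rpow_le_rpow_of_nonpos hy hyc (by linarith))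
    (prod_nonneg fun i _ => abs_nonneg _)

/-- The paper's `(Δ^k a)_j`. It is only used for `j ≥ k`, where `j - l` does not truncate. -/
def bwdDiffIter (k : ℕ) (a : ℕ → ℝ) (j : ℕ) : ℝ :=
  ∑ l ∈ range (k + 1), (-1 : ℝ) ^ l * k.choose l * a (j - l)

theorem bwdDiffIter_div_rpow_eq (k d m : ℕ) (p : ℝ) :
    bwdDiffIter k (fun i => ((i : ℝ) / d) ^ p) (k + m)
      = (Δ_[1])^[k] (fun t : ℝ => t ^ p) m / (d : ℝ) ^ p := by
  rw [bwdDiffIter, ← sum_alternating_choose_eq_fwdDiff_iter, sum_div]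
  refine sum_congr rfl fun l hl => ?_
  have hlk : l ≤ k + m := by have := mem_range.mp hl; omega
  rw [Real.div_rpow (Nat.cast_nonneg _) (Nat.cast_nonneg d), Nat.cast_sub hlk]
  push_cast
  ring_nf

theorem sum_sq_bwdDiffIter_div_rpow_le {k d : ℕ} (hkd : k ≤ d) {p : ℝ} (hp0 : 0 ≤ p)
    (hpk : p ≤ k) :
    ∑ j ∈ Icc k d, bwdDiffIter k (fun i => ((i : ℝ) / d) ^ p) j ^ 2
      ≤ ((2 ^ k * (k : ℝ) ^ p) ^ 2
          + (∏ i ∈ range k, |p - i|) ^ 2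
            * ∑ m ∈ range (d - k), ((m + 1 : ℝ) ^ (p - k)) ^ 2)
        / ((d : ℝ) ^ p) ^ 2 := by
  rw [← Ico_add_one_right_eq_Icc, sum_Ico_eq_sum_range, show d + 1 - k = d - k + 1 by omega,
    sum_range_succ', add_comm, add_div, mul_sum, sum_div]
  simp only [bwdDiffIter_div_rpow_eq, div_pow]
  gcongr ?_ / _ + ∑ m ∈ _, ?_ / _ with m
  · rw [← sq_abs]
    gcongr
    refine abs_fwdDiff_iter_le fun i hi => ?_
    rw [Nat.cast_zero, zero_add, abs_of_nonneg (by positivity)]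
    gcongr
  · rw [← mul_pow, ← sq_abs]
    gcongr
    push_cast
    exact abs_fwdDiff_iter_rpow_le hpk (by positivity)

noncomputable def bwdDiffRpowConst (k : ℕ) (p : ℝ) : ℝ :=
  (2 ^ k * (k : ℝ) ^ p) ^ 2 + (∏ i ∈ range k, |p - i|) ^ 2

theorem bwdDiffRpowConst_pos {k : ℕ} (hk : 1 ≤ k) (p : ℝ) : 0 < bwdDiffRpowConst k p := by
  have : (0 : ℝ) < k := by exact_mod_cast hk
  unfold bwdDiffRpowConst
  positivity

theorem log_exp_one_mul_eq_one_add_log {x : ℝ} (hx : x ≠ 0) :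
    Real.log (Real.exp 1 * x) = 1 + Real.log x := by
  rw [Real.log_mul (Real.exp_ne_zero 1) hx, Real.log_exp]

theorem sum_sq_bwdDiffIter_div_rpow_half_le {k d : ℕ} (hk : 1 ≤ k) (hkd : k ≤ d) :
    ∑ j ∈ Icc k d, bwdDiffIter k (fun i => ((i : ℝ) / d) ^ ((2 * (k : ℝ) - 1) / 2)) j ^ 2
      ≤ bwdDiffRpowConst k ((2 * k - 1) / 2) * Real.log (Real.exp 1 * d)
        / (d : ℝ) ^ (2 * k - 1) := by
  set p : ℝ := (2 * k - 1) / 2 with hp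
  have hk1 : (1 : ℝ) ≤ k := by exact_mod_cast hk
  have hd : (1 : ℝ) ≤ d := by exact_mod_cast hk.trans hkd
  have hlog := log_exp_one_mul_eq_one_add_log (x := d) (by positivity)
  have hharm :
      ∑ m ∈ range (d - k), ((m + 1 : ℝ) ^ (p - k)) ^ 2 ≤ Real.log (Real.exp 1 * d) :=
    calc ∑ m ∈ range (d - k), ((m + 1 : ℝ) ^ (p - k)) ^ 2
        = ∑ m ∈ range (d - k), ((m + 1 : ℕ) : ℝ)⁻¹ := sum_congr rfl fun m _ => by
          rw [← Real.rpow_mul_natCast (by positivity), show (p - k) * (2 : ℕ) = -1 by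
            rw [hp]; push_cast; ring, Real.rpow_neg_one]
          push_cast
          rfl
      _ ≤ ∑ m ∈ range d, ((m + 1 : ℕ) : ℝ)⁻¹ :=
          sum_le_sum_of_subset_of_nonneg (range_mono (Nat.sub_le d k))
            fun _ _ _ => by positivity
      _ = harmonic d := by simp [harmonic]
      _ ≤ Real.log (Real.exp 1 * d) := hlog ▸ harmonic_le_one_add_log d
  have hL : 1 ≤ Real.log (Real.exp 1 * d) := by
    linarith [Real.log_nonneg hd]
  have hdp : ((d : ℝ) ^ p) ^ 2 = (d : ℝ) ^ (2 * k - 1) := by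
    rw [← Real.rpow_mul_natCast (by positivity), ← Real.rpow_natCast, hp,
      Nat.cast_sub (by omega)]
    push_cast
    ring_nf
  refine (sum_sq_bwdDiffIter_div_rpow_le hkd (by linarith) (by linarith)).trans ?_
  rw [hdp, bwdDiffRpowConst]
  gcongr
  nlinarith [sq_nonneg (2 ^ k * (k : ℝ) ^ p), sq_nonneg (∏ i ∈ range k, |p - i|)]

theorem sum_sq_bwdDiffIter_div_pow_le {k d : ℕ} (hk : 1 ≤ k) (hkd : k ≤ d) :
    ∑ j ∈ Icc k d, bwdDiffIter k (fun i => ((i : ℝ) / d) ^ k) j ^ 2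
      ≤ bwdDiffRpowConst k k / (d : ℝ) ^ (2 * k - 1) := by
  have hd : (1 : ℝ) ≤ d := by exact_mod_cast hk.trans hkd
  have h := sum_sq_bwdDiffIter_div_rpow_le hkd (p := k) (Nat.cast_nonneg k) le_rfl
  simp only [Real.rpow_natCast, sub_self, Real.rpow_zero, one_pow, sum_const, card_range,
    nsmul_eq_mul, mul_one] at h
  have hdk : ((d : ℝ) ^ k) ^ 2 = d * (d : ℝ) ^ (2 * k - 1) := by
    rw [← pow_mul, ← pow_succ']
    congr 1
    omega
  refine h.trans ?_
  rw [hdk, ← div_div, bwdDiffRpowConst, Real.rpow_natCast]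
  gcongr
  rw [div_le_iff₀ (by positivity)]
  have : ((d - k : ℕ) : ℝ) ≤ d := by exact_mod_cast Nat.sub_le d k
  nlinarith [sq_nonneg (2 ^ k * (k : ℝ) ^ k), sq_nonneg (∏ i ∈ range k, |(k : ℝ) - i|)]

/-- **Discrete differences of some polynomials.**  For every `k ≥ 1` there is a constant `C_k`
depending only on `k` such that for every integer `d ≥ 2k` the following hold for the
(unnormalized) `k`-th order differences `(Δ^k a)_j := ∑_{l=0}^{k} (−1)^l binom(k,l) a_{j−l}`,
`j = k, …, d`:
(i) with `q_j := (j/d)^{(2k−1)/2}`, one has `∑_{j=k}^{d} (Δ^k q)_j² ≤ C_k log(e d)/d^{2k−1}`;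
(ii) with `p_j := (j/d)^k`, one has `∑_{j=k}^{d} (Δ^k p)_j² ≤ C_k/d^{2k−1}`. -/
theorem discrete_differences_of_polynomials (k : ℕ) (hk : 1 ≤ k) :
    ∃ C : ℝ, 0 < C ∧ ∀ d : ℕ, 2 * k ≤ d →
      (∑ j ∈ Finset.Icc k d,
          (∑ l ∈ Finset.range (k + 1),
              (-1 : ℝ) ^ l * (Nat.choose k l : ℝ) *
                (((j - l : ℕ) : ℝ) / (d : ℝ)) ^ ((2 * (k : ℝ) - 1) / 2)) ^ 2
        ≤ C * Real.log (Real.exp 1 * d) / (d : ℝ) ^ (2 * k - 1)) ∧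
      (∑ j ∈ Finset.Icc k d,
          (∑ l ∈ Finset.range (k + 1),
              (-1 : ℝ) ^ l * (Nat.choose k l : ℝ) *
                (((j - l : ℕ) : ℝ) / (d : ℝ)) ^ k) ^ 2
        ≤ C / (d : ℝ) ^ (2 * k - 1)) := by
  set C₁ := bwdDiffRpowConst k ((2 * k - 1) / 2)
  set C₂ := bwdDiffRpowConst k k
  have hC₁ : 0 < C₁ := bwdDiffRpowConst_pos hk _
  have hC₂ : 0 < C₂ := bwdDiffRpowConst_pos hk _
  refine ⟨C₁ + C₂, by positivity, fun d hd => ⟨?_, ?_⟩⟩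
  · have hL : 0 ≤ Real.log (Real.exp 1 * d) := Real.log_nonneg <|
      one_le_mul_of_one_le_of_one_le (Real.one_le_exp zero_le_one) (by exact_mod_cast (by omega))
    refine (sum_sq_bwdDiffIter_div_rpow_half_le hk (by omega)).trans ?_
    gcongr
    linarith
  · refine (sum_sq_bwdDiffIter_div_pow_le hk (by omega)).trans ?_
    gcongr
    linarith
end
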